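/- Let (X,d,m) be an mm-space with supp m = X satisfying CD(K,N) for some K > 0 and N ∈ (1,∞). Then X is compact and diam(X) ≤ π·√((N−1)/K). -/

import Mathlib

open MeasureTheory Filter Set Topology ENNReal
open scoped Classical

noncomputable section

/-- A coupling of two measures. -/
def IsCoupling {α β : Type*} [MeasurableSpace α] [MeasurableSpace β]
    (q : Measure (α × β)) (μ : Measure α) (ν : Measure β) : Prop :=
  Measure.map Prod.fst q = μ ∧ Measure.map Prod.snd q = ν

/-- Membership in the Wasserstein space `P₂`. -/
def MemP2 {α : Type*} [MetricSpace α] [MeasurableSpace α] (μ : Measure α) : Prop :=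
  IsProbabilityMeasure μ ∧ ∃ x₀ : α, ∫⁻ x, edist x x₀ ^ 2 ∂μ < ∞

/-- The squared Kantorovich–Wasserstein distance. -/
def Wsq {α : Type*} [MetricSpace α] [MeasurableSpace α] (μ ν : Measure α) : ℝ≥0∞ :=
  ⨅ (q : Measure (α × α)) (_ : IsCoupling q μ ν), ∫⁻ p, edist p.1 p.2 ^ 2 ∂q

/-- The Kantorovich–Wasserstein distance `W₂`. -/
def W2 {α : Type*} [MetricSpace α] [MeasurableSpace α] (μ ν : Measure α) : ℝ≥0∞ :=
  Wsq μ ν ^ (1/2 : ℝ)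

/-- A `W₂`-geodesic parametrized by `[0,1]`. -/
def IsW2Geodesic {α : Type*} [MetricSpace α] [MeasurableSpace α] (μ : ℝ → Measure α) : Prop :=
  ∀ s ∈ Icc (0:ℝ) 1, ∀ t ∈ Icc (0:ℝ) 1,
    W2 (μ s) (μ t) = ENNReal.ofReal |s - t| * W2 (μ 0) (μ 1)

/-- Integrand of the Boltzmann entropy. -/
def entFun {α : Type*} [MeasurableSpace α] (μ m : Measure α) (x : α) : ℝ :=
  (μ.rnDeriv m x).toReal * Real.log (μ.rnDeriv m x).toReal

/-- Boltzmann entropy `Ent(μ|m)`. -/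
def Ent {α : Type*} [MeasurableSpace α] (μ m : Measure α) : EReal :=
  if μ ≪ m ∧ Integrable (fun x => max (entFun μ m x) 0) m then
    ((∫ x, max (entFun μ m x) 0 ∂m : ℝ) : EReal)
      - ((∫⁻ x, ENNReal.ofReal (-(entFun μ m x)) ∂m : ℝ≥0∞) : EReal)
  else ⊤

/-- The CD(K,∞) convexity inequality along some geodesic from `μ₀` to `μ₁`. -/
def CDinftyFor {α : Type*} [MetricSpace α] [MeasurableSpace α]
    (K : ℝ) (m μ₀ μ₁ : Measure α) : Prop :=
  ∃ μ : ℝ → Measure α, μ 0 = μ₀ ∧ μ 1 = μ₁ ∧ IsW2Geodesic μ ∧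
    ∀ t ∈ Icc (0:ℝ) 1,
      Ent (μ t) m ≤ ((1 - t : ℝ) : EReal) * Ent μ₀ m + ((t : ℝ) : EReal) * Ent μ₁ m
        - ((K/2 * (t * (1-t)) : ℝ) : EReal) * ((Wsq μ₀ μ₁ : ℝ≥0∞) : EReal)

/-- The curvature-dimension condition CD(K,∞). -/
def CDinfty {α : Type*} [MetricSpace α] [MeasurableSpace α] (K : ℝ) (m : Measure α) : Prop :=
  ∀ μ₀ μ₁ : Measure α, MemP2 μ₀ → MemP2 μ₁ → CDinftyFor K m μ₀ μ₁

/-- Distortion coefficients `τ^{(t)}_{K,N}(θ)`. -/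
def tauCoef (K N t θ : ℝ) : ℝ≥0∞ :=
  if 0 < K then
    if Real.pi * Real.sqrt ((N-1)/K) ≤ θ then ∞
    else ENNReal.ofReal (t ^ (1/N) *
      (Real.sin (Real.sqrt (K/(N-1)) * (t * θ)) / Real.sin (Real.sqrt (K/(N-1)) * θ)) ^ ((N-1)/N))
  else if K = 0 then ENNReal.ofReal t
  else ENNReal.ofReal (t ^ (1/N) *
      (Real.sinh (Real.sqrt (-K/(N-1)) * (t * θ)) / Real.sinh (Real.sqrt (-K/(N-1)) * θ)) ^ ((N-1)/N))

/-- The CD(K,N) inequality along some geodesic/optimal coupling from `μ₀` to `μ₁`,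
with distortion coefficients `coef`. -/
def CDForWith {α : Type*} [MetricSpace α] [MeasurableSpace α]
    (coef : ℝ → ℝ → ℝ≥0∞) (N : ℝ) (m μ₀ μ₁ : Measure α) : Prop :=
  ∃ (μ : ℝ → Measure α) (q : Measure (α × α)),
    μ 0 = μ₀ ∧ μ 1 = μ₁ ∧ IsW2Geodesic μ ∧ (∀ t ∈ Icc (0:ℝ) 1, μ t ≪ m) ∧
    IsCoupling q μ₀ μ₁ ∧ (∫⁻ p, edist p.1 p.2 ^ 2 ∂q) = Wsq μ₀ μ₁ ∧
    ∀ t ∈ Icc (0:ℝ) 1,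
      ∫⁻ x, ((μ t).rnDeriv m x) ^ (1 - 1/N : ℝ) ∂m ≥
      ∫⁻ p, coef (1-t) (dist p.1 p.2) * (μ₀.rnDeriv m p.1) ^ (-(1/N) : ℝ)
            + coef t (dist p.1 p.2) * (μ₁.rnDeriv m p.2) ^ (-(1/N) : ℝ) ∂q

def CDFor {α : Type*} [MetricSpace α] [MeasurableSpace α]
    (K N : ℝ) (m μ₀ μ₁ : Measure α) : Prop :=
  CDForWith (fun t θ => tauCoef K N t θ) N m μ₀ μ₁

/-- The curvature-dimension condition CD(K,N). -/
def CD {α : Type*} [MetricSpace α] [MeasurableSpace α] (K N : ℝ) (m : Measure α) : Prop :=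
  ∀ μ₀ μ₁ : Measure α, MemP2 μ₀ → MemP2 μ₁ → μ₀ ≪ m → μ₁ ≪ m → CDFor K N m μ₀ μ₁

/-- The support of a measure on a topological space. -/
def mmSupp {α : Type*} [TopologicalSpace α] [MeasurableSpace α] (μ : Measure α) : Set α :=
  {x | ∀ U ∈ nhds x, 0 < μ U}



/-!
If `d(x, y) > π √((N - 1)/K)`, apply the CD inequality at `t = 0` to the normalized restrictions
of `m` to small balls around `x` and `y`: the coefficient `τ^{(1)}_{K,N}` is infinite at such
distances, so the right side is infinite while the left side is `m(B(x, δ))^(1/N) < ∞`.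

For compactness, comparing the uniform distributions on `B(x₀, δ)` and on a set `A ⊆ B̄(x₀, r)`
at `t = 1/2` gives the doubling-type bound `m(A) ≤ 2^N m(B̄(x₀, (3δ + r)/2))`. Iterating it from a
ball containing the bounded space `X` shows that `m(X) < ∞` and that the measures of all
`ε`-balls are bounded below uniformly, so `X` is totally bounded.
-/

open ProbabilityTheory

section Coupling

variable {α β : Type*} [MeasurableSpace α] [MeasurableSpace β]
  {q : Measure (α × β)} {μ : Measure α} {ν : Measure β}

lemma IsCoupling.isProbabilityMeasure [IsProbabilityMeasure μ] (h : IsCoupling q μ ν) :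
    IsProbabilityMeasure q := by
  rw [← Measure.isProbabilityMeasure_map_iff measurable_fst.aemeasurable, h.1]
  infer_instance

lemma IsCoupling.isProbabilityMeasure_right [IsProbabilityMeasure μ] (h : IsCoupling q μ ν) :
    IsProbabilityMeasure ν := by
  have := h.isProbabilityMeasure
  rw [← h.2]
  exact Measure.isProbabilityMeasure_map measurable_snd.aemeasurable

lemma IsCoupling.lintegral_comp_fst (h : IsCoupling q μ ν) {f : α → ℝ≥0∞} (hf : Measurable f) :
    ∫⁻ p, f p.1 ∂q = ∫⁻ x, f x ∂μ := by
  rw [← h.1, lintegral_map hf measurable_fst]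

lemma IsCoupling.lintegral_comp_snd (h : IsCoupling q μ ν) {f : β → ℝ≥0∞} (hf : Measurable f) :
    ∫⁻ p, f p.2 ∂q = ∫⁻ y, f y ∂ν := by
  rw [← h.2, lintegral_map hf measurable_snd]

lemma IsCoupling.ae_fst (h : IsCoupling q μ ν) {P : α → Prop} (hP : ∀ᵐ x ∂μ, P x) :
    ∀ᵐ p ∂q, P p.1 :=
  ae_of_ae_map measurable_fst.aemeasurable (h.1 ▸ hP)

lemma IsCoupling.ae_snd (h : IsCoupling q μ ν) {P : β → Prop} (hP : ∀ᵐ y ∂ν, P y) :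
    ∀ᵐ p ∂q, P p.2 :=
  ae_of_ae_map measurable_snd.aemeasurable (h.2 ▸ hP)

lemma isCoupling_prod (μ : Measure α) (ν : Measure β) [IsProbabilityMeasure μ]
    [IsProbabilityMeasure ν] : IsCoupling (μ.prod ν) μ ν := by
  simp [IsCoupling]

end Coupling

section Wasserstein

variable {X : Type*} [MetricSpace X]

lemma edist_sq_le_two_mul (x y z : X) :
    edist x z ^ 2 ≤ 2 * (edist x y ^ 2 + edist y z ^ 2) := by
  calc edist x z ^ 2 ≤ (edist x y + edist y z) ^ 2 := by gcongr; exact edist_triangle _ _ _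
    _ ≤ 2 * (edist x y ^ 2 + edist y z ^ 2) := by
        simp only [edist_nndist]
        exact_mod_cast add_sq_le (a := (nndist x y : ℝ)) (b := nndist y z)

variable [MeasurableSpace X]

lemma Wsq_le_lintegral {q : Measure (X × X)} {μ ν : Measure X} (h : IsCoupling q μ ν) :
    Wsq μ ν ≤ ∫⁻ p, edist p.1 p.2 ^ 2 ∂q :=
  iInf₂_le q h

lemma W2_sq (μ ν : Measure X) : W2 μ ν ^ 2 = Wsq μ ν := by
  rw [W2, ← ENNReal.rpow_natCast, ← ENNReal.rpow_mul]
  norm_num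

lemma exists_isCoupling_lintegral_lt_top {μ ν : Measure X} (h : Wsq μ ν < ∞) :
    ∃ q, IsCoupling q μ ν ∧ ∫⁻ p, edist p.1 p.2 ^ 2 ∂q < ∞ := by
  obtain ⟨q, hq⟩ := iInf_lt_iff.mp h
  obtain ⟨hc, hq⟩ := iInf_lt_iff.mp hq
  exact ⟨q, hc, hq⟩

variable [BorelSpace X]

lemma MemP2.lintegral_edist_sq_lt_top {μ : Measure X} (hμ : MemP2 μ) (z : X) :
    ∫⁻ x, edist x z ^ 2 ∂μ < ∞ := by
  obtain ⟨hprob, x₀, hx₀⟩ := hμ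
  calc ∫⁻ x, edist x z ^ 2 ∂μ ≤ ∫⁻ x, 2 * (edist x x₀ ^ 2 + edist x₀ z ^ 2) ∂μ :=
        lintegral_mono fun x => edist_sq_le_two_mul x x₀ z
    _ = 2 * (∫⁻ x, edist x x₀ ^ 2 ∂μ + edist x₀ z ^ 2) := by
        rw [lintegral_const_mul _ (by fun_prop), lintegral_add_right _ measurable_const,
          lintegral_const, measure_univ, mul_one]
    _ < ∞ := by finiteness

lemma MemP2.wsq_lt_top {μ ν : Measure X} (hμ : MemP2 μ) (hν : MemP2 ν) : Wsq μ ν < ∞ := by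
  have := hμ.1
  have := hν.1
  obtain ⟨-, z, hz⟩ := hν
  refine (Wsq_le_lintegral (isCoupling_prod μ ν)).trans_lt ?_
  calc ∫⁻ p, edist p.1 p.2 ^ 2 ∂(μ.prod ν)
      ≤ ∫⁻ p, 2 * (edist p.1 z ^ 2 + edist p.2 z ^ 2) ∂(μ.prod ν) := by
        refine lintegral_mono fun p => ?_
        simpa only [edist_comm z p.2] using edist_sq_le_two_mul p.1 z p.2
    _ = 2 * (∫⁻ x, edist x z ^ 2 ∂μ + ∫⁻ y, edist y z ^ 2 ∂ν) := by
        rw [lintegral_const_mul _ (by fun_prop), lintegral_add_left (by fun_prop),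
          (isCoupling_prod μ ν).lintegral_comp_fst (f := fun x => edist x z ^ 2) (by fun_prop),
          (isCoupling_prod μ ν).lintegral_comp_snd (f := fun x => edist x z ^ 2) (by fun_prop)]
    _ < ∞ := by finiteness [hμ.lintegral_edist_sq_lt_top z]

variable [SecondCountableTopology X]

lemma lintegral_edist_sq_lt_top_of_coupling {μ ν : Measure X} {q : Measure (X × X)}
    (hq : IsCoupling q μ ν) (hcost : ∫⁻ p, edist p.1 p.2 ^ 2 ∂q < ∞) {z : X}
    (hμ : ∫⁻ x, edist x z ^ 2 ∂μ < ∞) : ∫⁻ y, edist y z ^ 2 ∂ν < ∞ := by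
  rw [← hq.lintegral_comp_snd (f := fun y => edist y z ^ 2) (by fun_prop)]
  calc ∫⁻ p, edist p.2 z ^ 2 ∂q
      ≤ ∫⁻ p, 2 * (edist p.1 p.2 ^ 2 + edist p.1 z ^ 2) ∂q := by
        refine lintegral_mono fun p => ?_
        simpa only [edist_comm p.2 p.1] using edist_sq_le_two_mul p.2 p.1 z
    _ = 2 * (∫⁻ p, edist p.1 p.2 ^ 2 ∂q + ∫⁻ x, edist x z ^ 2 ∂μ) := by
        rw [lintegral_const_mul _ (by fun_prop), lintegral_add_left (by fun_prop),
          hq.lintegral_comp_fst (f := fun x => edist x z ^ 2) (by fun_prop)]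
    _ < ∞ := by finiteness

lemma MemP2.of_wsq_lt_top {μ ν : Measure X} (hμ : MemP2 μ) (h : Wsq μ ν < ∞) : MemP2 ν := by
  obtain ⟨q, hq, hcost⟩ := exists_isCoupling_lintegral_lt_top h
  have := hμ.1
  obtain ⟨-, z, hz⟩ := hμ
  exact ⟨hq.isProbabilityMeasure_right, z, lintegral_edist_sq_lt_top_of_coupling hq hcost hz⟩

end Wasserstein

lemma exists_glue {α β γ : Type*} [MeasurableSpace α] [MeasurableSpace β] [MeasurableSpace γ]
    [StandardBorelSpace γ] [Nonempty γ] (q₁ : Measure (α × β)) [SFinite q₁]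
    (q₂ : Measure (β × γ)) [IsFiniteMeasure q₂] (h : q₁.snd = q₂.fst) :
    ∃ P : Measure ((α × β) × γ), P.map Prod.fst = q₁ ∧ P.map (fun p => (p.1.2, p.2)) = q₂ := by
  refine ⟨q₁ ⊗ₘ Kernel.prodMkLeft α q₂.condKernel, Measure.fst_compProd _ _, ?_⟩
  have hmeas : Measurable fun p : (α × β) × γ => (p.1.2, p.2) := by fun_prop
  ext s hs
  rw [Measure.map_apply hmeas hs, Measure.compProd_apply (hmeas hs)]
  calc ∫⁻ a, Kernel.prodMkLeft α q₂.condKernel a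
          (Prod.mk a ⁻¹' ((fun p => (p.1.2, p.2)) ⁻¹' s)) ∂q₁
      = ∫⁻ b, q₂.condKernel b (Prod.mk b ⁻¹' s) ∂q₁.snd :=
        (lintegral_map (Kernel.measurable_kernel_prodMk_left hs) measurable_snd).symm
    _ = q₂ s := by rw [h, ← Measure.compProd_apply hs, q₂.disintegrate]

section Midpoint

variable {X : Type*} [MetricSpace X]

lemma two_mul_dist_le_of_sq_le {x y z : X}
    (h : 2 * (dist x y ^ 2 + dist y z ^ 2) ≤ dist x z ^ 2) : 2 * dist x y ≤ dist x z := by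
  have hxz := dist_triangle x y z
  have hxy := dist_nonneg (x := x) (y := y)
  have hyz := dist_nonneg (x := y) (y := z)
  -- `(a - b)² = 2(a² + b²) - (a + b)² ≤ d(x,z)² - (a + b)² ≤ 0`, so the two legs are equal.
  have hsq : (dist x y - dist y z) ^ 2 ≤ 0 := by
    nlinarith [mul_nonneg (sub_nonneg.2 hxz)
      (by positivity : 0 ≤ dist x y + dist y z + dist x z)]
  have hab : dist x y = dist y z := by nlinarith [sq_nonneg (dist x y - dist y z)]
  rw [← pow_le_pow_iff_left₀ (by positivity) dist_nonneg two_ne_zero]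
  rw [← hab] at h
  linarith

variable [MeasurableSpace X] [SecondCountableTopology X] [BorelSpace X]

lemma ae_two_mul_dist_le_of_lintegral_le {P : Measure ((X × X) × X)}
    (hfin : ∫⁻ p, edist p.1.1 p.1.2 ^ 2 ∂P + ∫⁻ p, edist p.1.2 p.2 ^ 2 ∂P ≠ ∞)
    (h : 2 * (∫⁻ p, edist p.1.1 p.1.2 ^ 2 ∂P + ∫⁻ p, edist p.1.2 p.2 ^ 2 ∂P)
      ≤ ∫⁻ p, edist p.1.1 p.2 ^ 2 ∂P) :
    ∀ᵐ p ∂P, 2 * dist p.1.1 p.1.2 ≤ dist p.1.1 p.2 := by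
  have hint : ∫⁻ p, 2 * (edist p.1.1 p.1.2 ^ 2 + edist p.1.2 p.2 ^ 2) ∂P
      = 2 * (∫⁻ p, edist p.1.1 p.1.2 ^ 2 ∂P + ∫⁻ p, edist p.1.2 p.2 ^ 2 ∂P) := by
    rw [lintegral_const_mul _ (by fun_prop), lintegral_add_left (by fun_prop)]
  have hle := lintegral_mono (μ := P) fun p => edist_sq_le_two_mul p.1.1 p.1.2 p.2
  have heq := ae_eq_of_ae_le_of_lintegral_le
    (ae_of_all P fun p => edist_sq_le_two_mul p.1.1 p.1.2 p.2)
    (ne_top_of_le_ne_top (by rw [hint]; finiteness) hle) (by fun_prop) (hint ▸ h)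
  filter_upwards [heq] with p hp
  refine two_mul_dist_le_of_sq_le (le_of_eq ?_)
  simp only [edist_nndist] at hp
  norm_cast at hp
  simp only [← coe_nndist]
  exact_mod_cast hp.symm

variable [CompleteSpace X] [TopologicalSpace.SeparableSpace X]

/- Gluing optimal plans `μ₀ → ν → μ₁` gives a law of triples `(x, y, z)` for which `hmid` forces
`2 d(x, y) ≤ d(x, z)` almost surely. -/
lemma ae_mem_closedBall_of_wsq_midpoint {μ₀ ν μ₁ : Measure X} [IsProbabilityMeasure μ₀]
    [IsProbabilityMeasure ν] {q₀ q₁ : Measure (X × X)}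
    (hq₀ : IsCoupling q₀ μ₀ ν) (hq₀opt : ∫⁻ p, edist p.1 p.2 ^ 2 ∂q₀ = Wsq μ₀ ν)
    (hq₁ : IsCoupling q₁ ν μ₁) (hq₁opt : ∫⁻ p, edist p.1 p.2 ^ 2 ∂q₁ = Wsq ν μ₁)
    (hfin : Wsq μ₀ ν + Wsq ν μ₁ ≠ ∞) (hmid : 2 * (Wsq μ₀ ν + Wsq ν μ₁) ≤ Wsq μ₀ μ₁)
    {x₀ : X} {δ r : ℝ} (h₀ : ∀ᵐ x ∂μ₀, x ∈ Metric.closedBall x₀ δ)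
    (h₁ : ∀ᵐ z ∂μ₁, z ∈ Metric.closedBall x₀ r) :
    ∀ᵐ y ∂ν, y ∈ Metric.closedBall x₀ ((3 * δ + r) / 2) := by
  have : Nonempty X := nonempty_of_isProbabilityMeasure ν
  have := hq₀.isProbabilityMeasure
  have := hq₁.isProbabilityMeasure
  obtain ⟨P, hP₀, hP₁⟩ := exists_glue q₀ q₁ (hq₀.2.trans hq₁.1.symm)
  have hm₁₂ : Measurable fun p : (X × X) × X => (p.1.2, p.2) := by fun_prop
  have hm₁₃ : Measurable fun p : (X × X) × X => (p.1.1, p.2) := by fun_prop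
  have hμ₀ : P.map (fun p => p.1.1) = μ₀ := by
    rw [← hq₀.1, ← hP₀, Measure.map_map measurable_fst measurable_fst]; rfl
  have hν : P.map (fun p => p.1.2) = ν := by
    rw [← hq₀.2, ← hP₀, Measure.map_map measurable_snd measurable_fst]; rfl
  have hμ₁ : P.map (fun p => p.2) = μ₁ := by
    rw [← hq₁.2, ← hP₁, Measure.map_map measurable_snd hm₁₂]; rfl
  have hcoup : IsCoupling (P.map fun p => (p.1.1, p.2)) μ₀ μ₁ := by
    constructor
    · rw [Measure.map_map measurable_fst hm₁₃]; exact hμ₀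
    · rw [Measure.map_map measurable_snd hm₁₃]; exact hμ₁
  have hcost₀ : ∫⁻ p, edist p.1.1 p.1.2 ^ 2 ∂P = Wsq μ₀ ν := by
    rw [← hq₀opt, ← hP₀, lintegral_map (by fun_prop) measurable_fst]
  have hcost₁ : ∫⁻ p, edist p.1.2 p.2 ^ 2 ∂P = Wsq ν μ₁ := by
    rw [← hq₁opt, ← hP₁, lintegral_map (by fun_prop) hm₁₂]
  have hcost : Wsq μ₀ μ₁ ≤ ∫⁻ p, edist p.1.1 p.2 ^ 2 ∂P := by
    refine (Wsq_le_lintegral hcoup).trans_eq ?_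
    rw [lintegral_map (by fun_prop) hm₁₃]
  have hsplit := ae_two_mul_dist_le_of_lintegral_le (P := P) (by rwa [hcost₀, hcost₁])
    (by rw [hcost₀, hcost₁]; exact hmid.trans hcost)
  have hP₀' : ∀ᵐ p ∂P, p.1.1 ∈ Metric.closedBall x₀ δ :=
    ae_of_ae_map (by fun_prop) (hμ₀ ▸ h₀)
  have hP₁' : ∀ᵐ p ∂P, p.2 ∈ Metric.closedBall x₀ r :=
    ae_of_ae_map (by fun_prop) (hμ₁ ▸ h₁)
  rw [← hν]
  refine (ae_map_iff (by fun_prop) measurableSet_closedBall).2 ?_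
  filter_upwards [hsplit, hP₀', hP₁'] with p hp hp₀ hp₁
  have hy := dist_triangle p.1.2 p.1.1 x₀
  have hxz := dist_triangle_right p.1.1 p.2 x₀
  rw [dist_comm p.1.2 p.1.1] at hy
  linarith [Metric.mem_closedBall.1 hp₀, Metric.mem_closedBall.1 hp₁]

end Midpoint

section Conditioning

variable {α : Type*} [MeasurableSpace α] {μ : Measure α} {s : Set α}

lemma rnDeriv_cond [SigmaFinite μ] (hs : MeasurableSet s) :
    (μ[|s]).rnDeriv μ =ᵐ[μ] s.indicator fun _ => (μ s)⁻¹ := by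
  have : μ[|s] = μ.withDensity (s.indicator fun _ => (μ s)⁻¹) := by
    rw [withDensity_indicator hs, withDensity_const, ProbabilityTheory.cond]
  rw [this]
  exact Measure.rnDeriv_withDensity μ (measurable_const.indicator hs)

lemma lintegral_rnDeriv_cond_rpow [SigmaFinite μ] (hs : MeasurableSet s) (h0 : μ s ≠ 0)
    (hfin : μ s ≠ ∞) {e : ℝ} (he : 0 < e) :
    ∫⁻ x, (μ[|s]).rnDeriv μ x ^ e ∂μ = μ s ^ (1 - e) := by
  calc ∫⁻ x, (μ[|s]).rnDeriv μ x ^ e ∂μ = ∫⁻ x, s.indicator (fun _ => (μ s)⁻¹ ^ e) x ∂μ := by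
        refine lintegral_congr_ae ?_
        filter_upwards [rnDeriv_cond hs] with x hx
        by_cases hxs : x ∈ s <;> simp [hx, hxs, ENNReal.zero_rpow_of_pos he]
    _ = μ s ^ (-e) * μ s ^ (1 : ℝ) := by
        rw [lintegral_indicator_const hs, ENNReal.inv_rpow, ← ENNReal.rpow_neg, ENNReal.rpow_one]
    _ = μ s ^ (1 - e) := by rw [← ENNReal.rpow_add _ _ h0 hfin, neg_add_eq_sub]

lemma ae_cond_rnDeriv_rpow_neg [SigmaFinite μ] (hs : MeasurableSet s) (e : ℝ) :
    ∀ᵐ x ∂μ[|s], (μ[|s]).rnDeriv μ x ^ (-e) = μ s ^ e := by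
  filter_upwards [ae_cond_mem hs, cond_absolutelyContinuous.ae_le (rnDeriv_cond hs)]
    with x hx hρ
  rw [hρ, indicator_of_mem hx, ENNReal.inv_rpow, ← ENNReal.rpow_neg, neg_neg]

lemma memP2_cond {X : Type*} [MetricSpace X] [MeasurableSpace X] [BorelSpace X] {μ : Measure X}
    {s : Set X} (hs : MeasurableSet s) (hbdd : Bornology.IsBounded s) (h0 : μ s ≠ 0)
    (hfin : μ s ≠ ∞) : MemP2 (μ[|s]) := by
  have := cond_isProbabilityMeasure_of_finite h0 hfin
  obtain ⟨z, -⟩ := nonempty_of_measure_ne_zero h0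
  obtain ⟨R, hR⟩ := hbdd.subset_closedBall z
  refine ⟨this, z, ?_⟩
  calc ∫⁻ x, edist x z ^ 2 ∂μ[|s] ≤ ∫⁻ _, ENNReal.ofReal R ^ 2 ∂μ[|s] := by
        refine lintegral_mono_ae ?_
        filter_upwards [ae_cond_mem hs] with x hx
        gcongr
        rw [edist_dist]
        exact ENNReal.ofReal_le_ofReal (hR hx)
    _ < ∞ := by simp

end Conditioning

lemma lintegral_rnDeriv_rpow_le {α : Type*} [MeasurableSpace α] {m ν : Measure α} [SigmaFinite m]
    [IsProbabilityMeasure ν] (hac : ν ≪ m) {S : Set α} (hS : MeasurableSet S)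
    (hνS : ∀ᵐ x ∂ν, x ∈ S) {p : ℝ} (hp₀ : 0 < p) (hp₁ : p < 1) :
    ∫⁻ x, ν.rnDeriv m x ^ p ∂m ≤ m S ^ (1 - p) := by
  set ρ := ν.rnDeriv m
  have hρ : Measurable ρ := Measure.measurable_rnDeriv ν m
  have hcompl : ∫⁻ x in Sᶜ, ρ x ^ p ∂m = 0 := by
    have : ∫⁻ x in Sᶜ, ρ x ∂m = 0 := by rw [Measure.setLIntegral_rnDeriv hac]; exact hνS
    rw [setLIntegral_eq_zero_iff hS.compl hρ] at this
    refine setLIntegral_eq_zero_iff hS.compl (hρ.pow_const p) |>.2 ?_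
    filter_upwards [this] with x hx hxS
    rw [hx hxS, ENNReal.zero_rpow_of_pos hp₀]
  have hHolder := ENNReal.lintegral_mul_le_Lp_mul_Lq (m.restrict S)
    (Real.HolderConjugate.inv_one_sub_inv hp₀ hp₁) (hρ.pow_const p).aemeasurable
    (aemeasurable_const (b := (1 : ℝ≥0∞)))
  simp only [Pi.mul_apply, mul_one, ENNReal.one_rpow, ← ENNReal.rpow_mul,
    mul_inv_cancel₀ hp₀.ne', ENNReal.rpow_one, one_div, inv_inv, setLIntegral_const,
    one_mul] at hHolder
  rw [← lintegral_add_compl _ hS, hcompl, add_zero]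
  calc ∫⁻ x in S, ρ x ^ p ∂m ≤ (∫⁻ x in S, ρ x ∂m) ^ p * m S ^ (1 - p) := hHolder
    _ ≤ 1 * m S ^ (1 - p) := by
        gcongr
        rw [Measure.setLIntegral_rnDeriv hac]
        exact ENNReal.rpow_le_one prob_le_one hp₀.le
    _ = m S ^ (1 - p) := one_mul _

lemma tauCoef_one_eq_top {K N θ : ℝ} (hK : 0 < K) (hθ : Real.pi * Real.sqrt ((N - 1) / K) ≤ θ) :
    tauCoef K N 1 θ = ∞ := by
  rw [tauCoef, if_pos hK, if_pos hθ]

lemma Real.inv_two_le_sin_half_div_sin {x : ℝ} (h₀ : 0 < x) (hπ : x < Real.pi) :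
    2⁻¹ ≤ Real.sin (x / 2) / Real.sin x := by
  have hsin : 0 < Real.sin (x / 2) := Real.sin_pos_of_pos_of_lt_pi (by linarith) (by linarith)
  have hcos : 0 < Real.cos (x / 2) := Real.cos_pos_of_mem_Ioo ⟨by linarith, by linarith⟩
  rw [show x = 2 * (x / 2) by ring, Real.sin_two_mul, show 2 * (x / 2) / 2 = x / 2 by ring,
    le_div_iff₀ (by positivity)]
  nlinarith [Real.cos_le_one (x / 2)]

lemma inv_two_le_tauCoef_half {K N θ : ℝ} (hK : 0 < K) (hN : 1 < N) (hθ : 0 < θ) :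
    2⁻¹ ≤ tauCoef K N 2⁻¹ θ := by
  rw [tauCoef, if_pos hK]
  split_ifs with hθL
  · exact le_top
  replace hθL := not_le.mp hθL
  set c := Real.sqrt (K / (N - 1))
  have hc : c * Real.sqrt ((N - 1) / K) = 1 := by
    rw [← Real.sqrt_mul (by positivity), div_mul_div_cancel₀', div_self, Real.sqrt_one] <;>
      linarith
  have hcθ : c * θ < Real.pi := by
    calc c * θ < c * (Real.pi * Real.sqrt ((N - 1) / K)) := by gcongr
      _ = Real.pi := by rw [mul_left_comm, hc, mul_one]
  have hratio := Real.inv_two_le_sin_half_div_sin (by positivity) hcθ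
  rw [show c * (2⁻¹ * θ) = c * θ / 2 by ring]
  calc (2⁻¹ : ℝ≥0∞) = ENNReal.ofReal ((2⁻¹ : ℝ) ^ (1 / N) * (2⁻¹ : ℝ) ^ ((N - 1) / N)) := by
        rw [← Real.rpow_add (by norm_num), show 1 / N + (N - 1) / N = 1 by field_simp; ring,
          Real.rpow_one, ENNReal.ofReal_inv_of_pos two_pos, ENNReal.ofReal_ofNat]
    _ ≤ _ := by gcongr

section CurvatureDimension

variable {X : Type*} [MetricSpace X] [MeasurableSpace X] {m : Measure X} {K N : ℝ}

lemma isOpenPosMeasure_of_mmSupp (hsupp : mmSupp m = univ) : m.IsOpenPosMeasure where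
  open_pos U hU hne := by
    obtain ⟨x, hx⟩ := hne
    have hx' : x ∈ mmSupp m := hsupp ▸ mem_univ x
    exact (hx' U (hU.mem_nhds hx)).ne'

lemma exists_pos_measure_ball_lt_top (m : Measure X) [IsLocallyFiniteMeasure m] (x : X) :
    ∃ ρ > 0, m (Metric.ball x ρ) < ∞ := by
  obtain ⟨s, hs, hsfin⟩ := m.finiteAt_nhds x
  obtain ⟨ρ, hρ, hball⟩ := Metric.mem_nhds_iff.mp hs
  exact ⟨ρ, hρ, (measure_mono hball).trans_lt hsfin⟩

lemma IsW2Geodesic.wsq_eq {μ : ℝ → Measure X} (hμ : IsW2Geodesic μ) {s t : ℝ}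
    (hs : s ∈ Icc (0 : ℝ) 1) (ht : t ∈ Icc (0 : ℝ) 1) :
    Wsq (μ s) (μ t) = ENNReal.ofReal ((s - t) ^ 2) * Wsq (μ 0) (μ 1) := by
  rw [← W2_sq, hμ s hs t ht, mul_pow, W2_sq, ← ENNReal.ofReal_pow (abs_nonneg _), sq_abs]

lemma CD.exists_optimal_coupling (hCD : CD K N m) {μ₀ μ₁ : Measure X} (h₀ : MemP2 μ₀)
    (h₁ : MemP2 μ₁) (hac₀ : μ₀ ≪ m) (hac₁ : μ₁ ≪ m) :
    ∃ q, IsCoupling q μ₀ μ₁ ∧ ∫⁻ p, edist p.1 p.2 ^ 2 ∂q = Wsq μ₀ μ₁ := by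
  obtain ⟨-, q, -, -, -, -, hq, hopt, -⟩ := hCD μ₀ μ₁ h₀ h₁ hac₀ hac₁
  exact ⟨q, hq, hopt⟩

variable [BorelSpace X] [SecondCountableTopology X]

lemma dist_le_of_CD [IsLocallyFiniteMeasure m] [m.IsOpenPosMeasure] (hK : 0 < K)
    (hN : 1 < N) (hCD : CD K N m) (x y : X) :
    dist x y ≤ Real.pi * Real.sqrt ((N - 1) / K) := by
  set L := Real.pi * Real.sqrt ((N - 1) / K)
  by_contra! hxy
  obtain ⟨ρ₀, hρ₀, hfin₀⟩ := exists_pos_measure_ball_lt_top m x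
  obtain ⟨ρ₁, hρ₁, hfin₁⟩ := exists_pos_measure_ball_lt_top m y
  set δ := min (min ρ₀ ρ₁) ((dist x y - L) / 2)
  have hδ : 0 < δ := lt_min (lt_min hρ₀ hρ₁) (by linarith)
  set B₀ := Metric.ball x δ
  set B₁ := Metric.ball y δ
  have hB₀ : m B₀ ≠ ∞ :=
    ne_top_of_le_ne_top hfin₀.ne (measure_mono (Metric.ball_subset_ball (by simp [δ])))
  have hB₁ : m B₁ ≠ ∞ :=
    ne_top_of_le_ne_top hfin₁.ne (measure_mono (Metric.ball_subset_ball (by simp [δ])))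
  have hB₀0 : m B₀ ≠ 0 := (Metric.measure_ball_pos m x hδ).ne'
  have hB₁0 : m B₁ ≠ 0 := (Metric.measure_ball_pos m y hδ).ne'
  have := cond_isProbabilityMeasure_of_finite hB₀0 hB₀
  obtain ⟨μ, q, hμ0, -, -, -, hq, -, hineq⟩ := hCD (m[|B₀]) (m[|B₁])
    (memP2_cond measurableSet_ball Metric.isBounded_ball hB₀0 hB₀)
    (memP2_cond measurableSet_ball Metric.isBounded_ball hB₁0 hB₁)
    cond_absolutelyContinuous cond_absolutelyContinuous
  have := hq.isProbabilityMeasure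
  have hfar : ∀ᵐ p ∂q, (⊤ : ℝ≥0∞) ≤
      tauCoef K N (1 - 0) (dist p.1 p.2) * (m[|B₀]).rnDeriv m p.1 ^ (-(1 / N))
        + tauCoef K N 0 (dist p.1 p.2) * (m[|B₁]).rnDeriv m p.2 ^ (-(1 / N)) := by
    filter_upwards [hq.ae_fst (ae_cond_mem measurableSet_ball),
      hq.ae_fst (ae_cond_rnDeriv_rpow_neg measurableSet_ball (1 / N)),
      hq.ae_snd (ae_cond_mem measurableSet_ball)] with p hp₀ hρ hp₁
    have hd : L ≤ dist p.1 p.2 := by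
      have := dist_triangle4 x p.1 p.2 y
      have := Metric.mem_ball'.1 hp₀
      have := Metric.mem_ball.1 hp₁
      have : δ ≤ (dist x y - L) / 2 := min_le_right _ _
      linarith
    rw [sub_zero, tauCoef_one_eq_top hK hd, hρ,
      ENNReal.top_mul (ENNReal.rpow_pos (pos_iff_ne_zero.2 hB₀0) hB₀).ne']
    exact le_self_add
  have hLHS := hineq 0 ⟨le_rfl, zero_le_one⟩
  rw [hμ0, lintegral_rnDeriv_cond_rpow measurableSet_ball hB₀0 hB₀ (by
    rw [sub_pos, div_lt_one (by linarith)]; exact hN)] at hLHS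
  refine (ENNReal.rpow_lt_top_of_nonneg
    (by norm_num; linarith) hB₀).not_ge (le_trans ?_ hLHS)
  calc ⊤ = ∫⁻ _, ⊤ ∂q := by simp
    _ ≤ _ := lintegral_mono_ae hfar

end CurvatureDimension

lemma ENNReal.le_two_rpow_mul_of_inv_two_mul_rpow_le {a b : ℝ≥0∞} {N : ℝ} (hN : 0 < N)
    (h : 2⁻¹ * a ^ (1 / N) ≤ b ^ (1 / N)) : a ≤ 2 ^ N * b := by
  have h2N : (2 : ℝ≥0∞) ^ N ≠ 0 := (ENNReal.rpow_pos two_pos ENNReal.ofNat_ne_top).ne'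
  have h2N' : (2 : ℝ≥0∞) ^ N ≠ ∞ := ENNReal.rpow_ne_top_of_nonneg hN.le ENNReal.ofNat_ne_top
  have := ENNReal.rpow_le_rpow h hN.le
  rw [ENNReal.mul_rpow_of_nonneg _ _ hN.le, ← ENNReal.rpow_mul, ← ENNReal.rpow_mul,
    one_div_mul_cancel hN.ne', ENNReal.rpow_one, ENNReal.rpow_one, ENNReal.inv_rpow] at this
  exact (ENNReal.inv_mul_le_iff h2N h2N').1 this

section Doubling

variable {X : Type*} [MetricSpace X] [CompleteSpace X] [TopologicalSpace.SeparableSpace X]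
  [MeasurableSpace X] [BorelSpace X] {m : Measure X} [SigmaFinite m] {K N : ℝ}

/- The midpoint of the geodesic lives on `B̄(x₀, (3δ + r)/2)`, so by Hölder the left side of the
CD inequality at `t = 1/2` is at most `m(B̄)^(1/N)`, while `τ^{(1/2)} ≥ 1/2` bounds its right side
below by `m(A)^(1/N) / 2`. -/
lemma measure_le_two_rpow_mul_of_CD (hK : 0 < K) (hN : 1 < N) (hCD : CD K N m) {x₀ : X}
    {δ r : ℝ} (hB₀ : m (Metric.ball x₀ δ) ≠ 0) (hB₀fin : m (Metric.ball x₀ δ) ≠ ∞)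
    {A : Set X} (hA : MeasurableSet A) (hAr : A ⊆ Metric.closedBall x₀ r)
    (hAδ : Disjoint A (Metric.ball x₀ δ)) (hAfin : m A ≠ ∞) :
    m A ≤ 2 ^ N * m (Metric.closedBall x₀ ((3 * δ + r) / 2)) := by
  rcases eq_or_ne (m A) 0 with hA0 | hA0
  · simp [hA0]
  set μ₀ := m[|Metric.ball x₀ δ]
  set μ₁ := m[|A]
  have := cond_isProbabilityMeasure_of_finite hB₀ hB₀fin
  have hP₀ : MemP2 μ₀ := memP2_cond measurableSet_ball Metric.isBounded_ball hB₀ hB₀fin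
  have hP₁ : MemP2 μ₁ :=
    memP2_cond hA (Metric.isBounded_closedBall.subset hAr) hA0 hAfin
  obtain ⟨μ, q, hμ0, hμ1, hgeo, hac, hq, -, hineq⟩ :=
    hCD μ₀ μ₁ hP₀ hP₁ cond_absolutelyContinuous cond_absolutelyContinuous
  have hhalf : (2⁻¹ : ℝ) ∈ Icc (0 : ℝ) 1 := by norm_num
  set ν := μ 2⁻¹
  have hW : Wsq μ₀ μ₁ ≠ ∞ := (hP₀.wsq_lt_top hP₁).ne
  have hW₀ : Wsq μ₀ ν = 4⁻¹ * Wsq μ₀ μ₁ := by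
    rw [← hμ0, hgeo.wsq_eq ⟨le_rfl, zero_le_one⟩ hhalf, hμ1, hμ0,
      show ((0 : ℝ) - 2⁻¹) ^ 2 = 4⁻¹ by norm_num, ENNReal.ofReal_inv_of_pos (by norm_num),
      ENNReal.ofReal_ofNat]
  have hW₁ : Wsq ν μ₁ = 4⁻¹ * Wsq μ₀ μ₁ := by
    rw [← hμ1, hgeo.wsq_eq hhalf ⟨zero_le_one, le_rfl⟩, hμ0, hμ1,
      show ((2 : ℝ)⁻¹ - 1) ^ 2 = 4⁻¹ by norm_num, ENNReal.ofReal_inv_of_pos (by norm_num),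
      ENNReal.ofReal_ofNat]
  have hν : MemP2 ν := hP₀.of_wsq_lt_top (by rw [hW₀]; finiteness)
  have := hν.1
  have hνm : ν ≪ m := hac 2⁻¹ hhalf
  obtain ⟨q₀, hq₀, hq₀opt⟩ := hCD.exists_optimal_coupling hP₀ hν cond_absolutelyContinuous hνm
  obtain ⟨q₁, hq₁, hq₁opt⟩ := hCD.exists_optimal_coupling hν hP₁ hνm cond_absolutelyContinuous
  have hνS : ∀ᵐ y ∂ν, y ∈ Metric.closedBall x₀ ((3 * δ + r) / 2) :=
    ae_mem_closedBall_of_wsq_midpoint hq₀ hq₀opt hq₁ hq₁opt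
      (by rw [hW₀, hW₁]; finiteness)
      (by rw [hW₀, hW₁, ← two_mul, ← mul_assoc, ← mul_assoc,
        show (2 : ℝ≥0∞) * 2 = 4 by norm_num, ENNReal.mul_inv_cancel (by norm_num) (by norm_num),
        one_mul])
      (by filter_upwards [ae_cond_mem measurableSet_ball] with x hx
          exact Metric.ball_subset_closedBall hx)
      (by filter_upwards [ae_cond_mem hA] with x hx using hAr hx)
  have hupper := lintegral_rnDeriv_rpow_le hνm measurableSet_closedBall hνS
    (p := 1 - 1 / N) (by rw [sub_pos, div_lt_one (by linarith)]; exact hN) (by simp; linarith)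
  rw [_root_.sub_sub_cancel] at hupper
  have := hq.isProbabilityMeasure
  have hlower : ∫⁻ _, 2⁻¹ * m A ^ (1 / N) ∂q ≤
      ∫⁻ p, tauCoef K N (1 - 2⁻¹) (dist p.1 p.2) * μ₀.rnDeriv m p.1 ^ (-(1 / N))
        + tauCoef K N 2⁻¹ (dist p.1 p.2) * μ₁.rnDeriv m p.2 ^ (-(1 / N)) ∂q := by
    refine lintegral_mono_ae ?_
    filter_upwards [hq.ae_fst (ae_cond_mem measurableSet_ball), hq.ae_snd (ae_cond_mem hA),
      hq.ae_snd (ae_cond_rnDeriv_rpow_neg hA (1 / N))] with p hp₀ hp₁ hρ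
    have hne : p.1 ≠ p.2 := fun h => hAδ.ne_of_mem hp₁ hp₀ h.symm
    rw [hρ]
    exact le_add_left (by gcongr; exact inv_two_le_tauCoef_half hK hN (dist_pos.2 hne))
  rw [lintegral_const, measure_univ, mul_one] at hlower
  exact ENNReal.le_two_rpow_mul_of_inv_two_mul_rpow_le (by linarith)
    (hlower.trans ((hineq 2⁻¹ hhalf).trans hupper))

variable [m.IsOpenPosMeasure]

lemma measure_ball_le_of_CD (hK : 0 < K) (hN : 1 < N) (hCD : CD K N m) {y : X} {δ r : ℝ}
    (hδ : 0 < δ) (hfin : m (Metric.ball y δ) ≠ ∞) (hr : 0 ≤ r) :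
    m (Metric.ball y r) ≤ (2 ^ N + 1) * m (Metric.ball y (r / 2 + 2 * δ)) := by
  set D := Metric.ball y r \ Metric.ball y δ
  have hD : m D ≤ 2 ^ N * m (Metric.closedBall y ((3 * δ + r) / 2)) := by
    rw [← Measure.iSup_restrict_spanningSets]
    refine iSup_le fun i => ?_
    rw [Measure.restrict_apply' (measurableSet_spanningSets m i)]
    exact measure_le_two_rpow_mul_of_CD hK hN hCD (Metric.measure_ball_pos m y hδ).ne' hfin
      ((measurableSet_ball.diff measurableSet_ball).inter (measurableSet_spanningSets m i))
      (inter_subset_left.trans (sdiff_subset.trans Metric.ball_subset_closedBall))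
      (disjoint_sdiff_left.mono_left inter_subset_left)
      (measure_ne_top_of_subset inter_subset_right (measure_spanningSets_lt_top m i).ne)
  calc m (Metric.ball y r) ≤ m (Metric.ball y δ) + m D := by
        rw [← measure_union disjoint_sdiff_right (measurableSet_ball.diff measurableSet_ball)]
        exact measure_mono (sdiff_subset_iff.1 subset_rfl)
    _ ≤ m (Metric.ball y (r / 2 + 2 * δ)) + 2 ^ N * m (Metric.ball y (r / 2 + 2 * δ)) :=
        add_le_add (measure_mono (Metric.ball_subset_ball (by linarith)))
          (hD.trans (mul_le_mul_right (measure_mono (Metric.closedBall_subset_ball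
            (by linarith))) _))
    _ = (2 ^ N + 1) * m (Metric.ball y (r / 2 + 2 * δ)) := by ring

lemma measure_ball_le_pow_mul_of_CD (hK : 0 < K) (hN : 1 < N) (hCD : CD K N m) {y : X}
    {δ r : ℝ} (hδ : 0 < δ) (hfin : m (Metric.ball y δ) ≠ ∞) (hr : 0 ≤ r) (k : ℕ) :
    m (Metric.ball y r) ≤ (2 ^ N + 1) ^ k * m (Metric.ball y (r / 2 ^ k + 4 * δ)) := by
  induction k with
  | zero => simpa using measure_mono (Metric.ball_subset_ball (by linarith))
  | succ k ih =>
    calc m (Metric.ball y r) ≤ (2 ^ N + 1) ^ k * m (Metric.ball y (r / 2 ^ k + 4 * δ)) := ih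
      _ ≤ (2 ^ N + 1) ^ k *
          ((2 ^ N + 1) * m (Metric.ball y ((r / 2 ^ k + 4 * δ) / 2 + 2 * δ))) := by
          gcongr
          exact measure_ball_le_of_CD hK hN hCD hδ hfin (by positivity)
      _ = (2 ^ N + 1) ^ (k + 1) * m (Metric.ball y (r / 2 ^ (k + 1) + 4 * δ)) := by
          rw [← mul_assoc, ← pow_succ]
          congr 3
          ring

end Doubling

lemma totallyBounded_univ_of_le_measure_ball {X : Type*} [MetricSpace X] [MeasurableSpace X]
    [OpensMeasurableSpace X] (m : Measure X) [IsFiniteMeasure m]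
    (h : ∀ ε > 0, ∃ β ≠ 0, ∀ x, β ≤ m (Metric.ball x ε)) : TotallyBounded (univ : Set X) := by
  rw [Metric.totallyBounded_iff]
  intro ε hε
  by_contra! hcover
  obtain ⟨u, -, hu⟩ := exists_seq_of_forall_finset_exists (fun _ : X => True)
    (fun x y => ε ≤ dist x y) fun s _ => by
      obtain ⟨y, -, hy⟩ := not_subset.1 (hcover s s.finite_toSet)
      exact ⟨y, trivial, fun x hx => not_lt.1 fun hxy =>
        hy (mem_biUnion hx (Metric.mem_ball'.2 hxy))⟩
  obtain ⟨β, hβ, hβle⟩ := h (ε / 2) (half_pos hε)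
  have hdisj : Pairwise fun i j =>
      Disjoint (Metric.ball (u i) (ε / 2)) (Metric.ball (u j) (ε / 2)) := by
    intro i j hij
    refine Metric.ball_disjoint_ball ?_
    rcases hij.lt_or_gt with hlt | hlt
    · linarith [hu i j hlt]
    · linarith [hu j i hlt, dist_comm (u i) (u j)]
  refine measure_ne_top m univ (top_le_iff.1 ?_)
  calc ⊤ = ∑' _ : ℕ, β := (ENNReal.tsum_const_eq_top_of_ne_zero hβ).symm
    _ ≤ ∑' n, m (Metric.ball (u n) (ε / 2)) := ENNReal.tsum_le_tsum fun n => hβle (u n)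
    _ = m (⋃ n, Metric.ball (u n) (ε / 2)) :=
        (measure_iUnion hdisj fun _ => measurableSet_ball).symm
    _ ≤ m univ := measure_mono (subset_univ _)

lemma exists_measure_univ_le_pow_mul_of_CD {X : Type*} [MetricSpace X] [CompleteSpace X]
    [TopologicalSpace.SeparableSpace X] [MeasurableSpace X] [BorelSpace X] {m : Measure X}
    [SigmaFinite m] [m.IsOpenPosMeasure] {K N R : ℝ} (hK : 0 < K) (hN : 1 < N)
    (hCD : CD K N m) (hR : ∀ x y : X, dist x y < R) {ε : ℝ} (hε : 0 < ε) :
    ∃ k : ℕ, ∀ x, m (Metric.ball x (ε / 8)) ≠ ∞ →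
      m univ ≤ (2 ^ N + 1) ^ k * m (Metric.ball x ε) := by
  obtain ⟨k, hk⟩ := pow_unbounded_of_one_lt (2 * R / ε) one_lt_two
  refine ⟨k, fun x hfin => ?_⟩
  have hR₀ : 0 ≤ R := (dist_self x ▸ hR x x).le
  calc m univ ≤ m (Metric.ball x R) := measure_mono fun y _ => Metric.mem_ball.2 (hR y x)
    _ ≤ (2 ^ N + 1) ^ k * m (Metric.ball x (R / 2 ^ k + 4 * (ε / 8))) :=
        measure_ball_le_pow_mul_of_CD hK hN hCD (by positivity) hfin hR₀ k
    _ ≤ (2 ^ N + 1) ^ k * m (Metric.ball x ε) := by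
        gcongr
        rw [div_lt_iff₀ hε] at hk
        rw [div_add' _ _ _ (by positivity), div_le_iff₀ (by positivity)]
        nlinarith

/-- **Bonnet–Myers diameter bound.** A CD(K,N) space with `K > 0` and finite `N` is
compact with diameter at most `π √((N-1)/K)`. -/
theorem bonnet_myers
    {X : Type*} [MetricSpace X] [CompleteSpace X] [TopologicalSpace.SeparableSpace X]
    [MeasurableSpace X] [BorelSpace X] (m : Measure X) [IsLocallyFiniteMeasure m]
    (hsupp : mmSupp m = Set.univ) (K N : ℝ) (hK : 0 < K) (hN : 1 < N)
    (hCD : CD K N m) :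
    CompactSpace X ∧
    Metric.diam (Set.univ : Set X) ≤ Real.pi * Real.sqrt ((N - 1) / K) := by
  have := isOpenPosMeasure_of_mmSupp hsupp
  have hdist : ∀ x y : X, dist x y ≤ Real.pi * Real.sqrt ((N - 1) / K) := dist_le_of_CD hK hN hCD
  refine ⟨?_, Metric.diam_le_of_forall_dist_le (by positivity) fun x _ y _ => hdist x y⟩
  rcases isEmpty_or_nonempty X with hX | ⟨⟨z⟩⟩
  · infer_instance
  have hR : ∀ x y : X, dist x y < Real.pi * Real.sqrt ((N - 1) / K) + 1 :=
    fun x y => (hdist x y).trans_lt (lt_add_one _)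
  obtain ⟨ρ, hρ, hρfin⟩ := exists_pos_measure_ball_lt_top m z
  have : IsFiniteMeasure m := by
    obtain ⟨k, hk⟩ := exists_measure_univ_le_pow_mul_of_CD hK hN hCD hR hρ
    exact ⟨(hk z (measure_ne_top_of_subset (Metric.ball_subset_ball (by linarith))
      hρfin.ne)).trans_lt (by finiteness)⟩
  rw [← isCompact_univ_iff, isCompact_iff_totallyBounded_isComplete]
  refine ⟨totallyBounded_univ_of_le_measure_ball m fun ε hε => ?_, isComplete_univ⟩
  obtain ⟨k, hk⟩ := exists_measure_univ_le_pow_mul_of_CD hK hN hCD hR hε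
  refine ⟨m univ / (2 ^ N + 1) ^ k, ?_, fun x => ENNReal.div_le_of_le_mul' (hk x (by finiteness))⟩
  exact ENNReal.div_ne_zero.2 ⟨isOpen_univ.measure_ne_zero m ⟨z, mem_univ z⟩, by finiteness⟩

end
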